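/- For every n, 5 does not divide C_n and 7 does not divide C_n. -/
import Mathlib

def C : ℕ → ℕ
  | 0 => 1
  | 1 => 3
  | n + 2 => 6 * C (n + 1) - C n

lemma C_mono : ∀ n, C n ≤ C (n + 1) := by
  intro n
  induction n using Nat.strong_induction_on with
  | _ n ih =>
    match n with
    | 0 => simp [C]
    | 1 => simp [C]
    | n + 2 =>
      have h1 := ih (n+1) (by omega)
      have h0 := ih n (by omega)
      show C (n+2) ≤ 6 * C (n + 2) - C (n+1)
      have : C (n+1) ≤ C (n+2) := h1
      omega

lemma C_rec (n : ℕ) : C (n + 1 + 1) + C n = 6 * C (n + 1) := by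
  have h := C_mono n
  show 6 * C (n+1) - C n + C n = 6 * C (n+1)
  omega

set_option maxHeartbeats 1000000 in
lemma C_resid : ∀ n, (C n % 35 = 1 ∧ C (n+1) % 35 = 3) ∨
    (C n % 35 = 3 ∧ C (n+1) % 35 = 17) ∨
    (C n % 35 = 17 ∧ C (n+1) % 35 = 29) ∨
    (C n % 35 = 29 ∧ C (n+1) % 35 = 17) ∨
    (C n % 35 = 17 ∧ C (n+1) % 35 = 3) ∨
    (C n % 35 = 3 ∧ C (n+1) % 35 = 1) := by
  intro n
  induction n with
  | zero => simp [C]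
  | succ n ih =>
    have h := C_rec n
    omega

theorem stmt17 (n : ℕ) : ¬ 5 ∣ C n ∧ ¬ 7 ∣ C n := by
  have h := C_resid n
  omega
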